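/- Let n ≥ 1 be an integer, let Σ ⊂ ℝⁿ be a nonempty compact set, and let d : ℝⁿ → ℝ be the distance function d(y) := dist(y, Σ) = inf_{z∈Σ} ‖y − z‖. Suppose x ∈ ℝⁿ, x ∉ Σ, and d is differentiable at x. Then ‖∇d(x)‖ = 1; moreover, there exists a unique point x̄ ∈ Σ with ‖x − x̄‖ = d(x), and for this point ∇d(x) = (x − x̄)/‖x − x̄‖, where ∇d(x) denotes the gradient of d at x. -/

import Mathlib

open MeasureTheory Metric Set Filter
open scoped ENNReal Topology

noncomputable section

abbrev Eu (n : ℕ) := EuclideanSpace ℝ (Fin n)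

/-- Fractional Laplacian of a (test) function, defined via the Fourier transform:
`(−Δ)^γ φ(x) = ∫ (2π‖ξ‖)^{2γ} 𝓕φ(ξ) e^{2πi⟨x,ξ⟩} dξ`. -/
def fracLap {n : ℕ} (γ : ℝ) (φ : Eu n → ℝ) (x : Eu n) : ℝ :=
  (∫ ξ : Eu n,
      (((2 * Real.pi * ‖ξ‖) ^ (2 * γ) : ℝ) : ℂ) *
        (∫ y : Eu n,
            (φ y : ℂ) * Complex.exp (-(2 * Real.pi * Complex.I) * ((inner ℝ y ξ : ℝ) : ℂ))) *
        Complex.exp (2 * Real.pi * Complex.I * ((inner ℝ x ξ : ℝ) : ℂ))).re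

/-- Membership in the space `L_s(ℝⁿ)`: locally integrable with
`∫ |u(x)|/(1+‖x‖^{n+2s}) dx < ∞`. -/
def memLs (n : ℕ) (s : ℝ) (u : Eu n → ℝ) : Prop :=
  LocallyIntegrable u volume ∧
    Integrable (fun x : Eu n => |u x| / (1 + ‖x‖ ^ ((n : ℝ) + 2 * s))) volume

/-!
If `p ∈ S` is a nearest point to `x`, the distance function decreases with unit speed along the
segment from `x` to `p`, so its derivative at `x` in the direction of the unit vector
`u = (x - p) / ‖x - p‖` equals `1`. Being `1`-Lipschitz, the distance function has gradient of
norm at most `1`, and the equality case of Cauchy–Schwarz forces `∇ d(x) = u`. Since this holds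
for every nearest point, `p = x - d(x) ∇ d(x)` is unique.
-/

open AffineMap

section Segment

variable {V P : Type*} [SeminormedAddCommGroup V] [NormedSpace ℝ V] [PseudoMetricSpace P]
  [NormedAddTorsor V P] {S : Set P} {x p : P}

theorem infDist_lineMap_of_dist_eq_infDist (hp : p ∈ S) (hxp : dist x p = infDist x S)
    {t : ℝ} (ht : t ∈ Icc 0 1) : infDist (lineMap x p t) S = (1 - t) * infDist x S := by
  have hp_near : dist (lineMap x p t) p = (1 - t) * infDist x S := by
    rw [dist_lineMap_right, Real.norm_of_nonneg (sub_nonneg.2 ht.2), hxp]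
  have hx_near : dist x (lineMap x p t) = t * infDist x S := by
    rw [dist_left_lineMap, Real.norm_of_nonneg ht.1, hxp]
  refine le_antisymm (hp_near ▸ infDist_le_dist_of_mem hp) ?_
  linarith [infDist_le_infDist_add_dist (s := S) (x := x) (y := lineMap x p t)]

end Segment

section Directional

variable {E : Type*} [NormedAddCommGroup E] [NormedSpace ℝ E] {S : Set E} {x p : E}

theorem fderiv_infDist_apply_sub_of_dist_eq_infDist (hp : p ∈ S)
    (hxp : dist x p = infDist x S) (hd : DifferentiableAt ℝ (infDist · S) x) :
    fderiv ℝ (infDist · S) x (x - p) = infDist x S := by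
  rw [← neg_sub, map_neg, neg_eq_iff_eq_neg]
  have hline : HasDerivWithinAt (fun t : ℝ => infDist (x + t • (p - x)) S)
      (fderiv ℝ (infDist · S) x (p - x)) (Icc 0 1) 0 :=
    (hd.hasFDerivAt.hasLineDerivAt (p - x)).hasDerivWithinAt
  have hlin : HasDerivWithinAt (fun t : ℝ => (1 - t) * infDist x S) (-infDist x S)
      (Icc 0 1) 0 := by
    simpa using (((hasDerivAt_id (0 : ℝ)).const_sub 1).mul_const (infDist x S)).hasDerivWithinAt
  refine (uniqueDiffOn_Icc one_pos 0 (left_mem_Icc.2 zero_le_one)).eq_deriv _ ?_ hlin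
  refine hline.congr (fun t ht => ?_) (by simp)
  rw [← infDist_lineMap_of_dist_eq_infDist hp hxp ht, lineMap_apply_module', add_comm]

end Directional

section Gradient

variable {E : Type*} [NormedAddCommGroup E] [InnerProductSpace ℝ E]

theorem eq_of_norm_le_one_of_inner_eq_one {g u : E} (hg : ‖g‖ ≤ 1) (hu : ‖u‖ = 1)
    (hgu : inner ℝ g u = 1) : g = u := by
  have hg1 : ‖g‖ = 1 := le_antisymm hg <| by
    simpa [hu, hgu] using real_inner_le_norm g u
  exact (inner_eq_one_iff_of_norm_eq_one hg1 hu).1 hgu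

variable [CompleteSpace E] {S : Set E} {x p : E}

theorem norm_gradient_infDist_le : ‖gradient (infDist · S) x‖ ≤ 1 := by
  rw [gradient, LinearIsometryEquiv.norm_map]
  simpa using norm_fderiv_le_of_lipschitz ℝ (x₀ := x) (lipschitz_infDist_pt S)

theorem gradient_infDist_of_dist_eq_infDist (hx : x ∉ S) (hp : p ∈ S)
    (hxp : dist x p = infDist x S) (hd : DifferentiableAt ℝ (infDist · S) x) :
    gradient (infDist · S) x = ‖x - p‖⁻¹ • (x - p) := by
  have hxp' : x - p ≠ 0 := sub_ne_zero.2 (ne_of_mem_of_not_mem hp hx).symm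
  refine eq_of_norm_le_one_of_inner_eq_one norm_gradient_infDist_le (norm_smul_inv_norm hxp') ?_
  rw [inner_smul_right, inner_gradient_left, fderiv_infDist_apply_sub_of_dist_eq_infDist hp hxp hd,
    ← hxp, dist_eq_norm, inv_mul_cancel₀ (norm_ne_zero_iff.2 hxp')]

end Gradient

theorem distance_function_gradient_general
    (n : ℕ)
    (S : Set (Eu n)) (hSne : S.Nonempty) (hScpt : IsCompact S)
    (x : Eu n) (hx : x ∉ S)
    (hd : DifferentiableAt ℝ (fun y : Eu n => infDist y S) x) :
    ‖gradient (fun y : Eu n => infDist y S) x‖ = 1 ∧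
    (∃! xb : Eu n, xb ∈ S ∧ ‖x - xb‖ = infDist x S) ∧
    ∀ xb ∈ S, ‖x - xb‖ = infDist x S →
      gradient (fun y : Eu n => infDist y S) x = ‖x - xb‖⁻¹ • (x - xb) := by
  have hgrad : ∀ q ∈ S, ‖x - q‖ = infDist x S →
      gradient (fun y : Eu n => infDist y S) x = ‖x - q‖⁻¹ • (x - q) := fun q hq hxq =>
    gradient_infDist_of_dist_eq_infDist hx hq (by rwa [dist_eq_norm]) hd
  obtain ⟨p, hp, hxp⟩ := hScpt.exists_infDist_eq_dist hSne x
  rw [dist_eq_norm, eq_comm] at hxp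
  have hxp_ne : x - p ≠ 0 := sub_ne_zero.2 (ne_of_mem_of_not_mem hp hx).symm
  refine ⟨hgrad p hp hxp ▸ norm_smul_inv_norm hxp_ne, ⟨p, ⟨hp, hxp⟩, ?_⟩, hgrad⟩
  rintro q ⟨hq, hxq⟩
  have hsame := (hgrad q hq hxq).symm.trans (hgrad p hp hxp)
  rw [hxq, ← hxp] at hsame
  exact sub_right_injective <|
    smul_right_injective _ (inv_ne_zero (norm_ne_zero_iff.2 hxp_ne)) hsame

/-- Proposition: at a point of differentiability outside `S`, the distance function
has gradient of norm one, the nearest point is unique, and the gradient points away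
from it. -/
theorem distance_function_gradient
    (n : ℕ) (hn : 1 ≤ n)
    (S : Set (Eu n)) (hSne : S.Nonempty) (hScpt : IsCompact S)
    (x : Eu n) (hx : x ∉ S)
    (hd : DifferentiableAt ℝ (fun y : Eu n => infDist y S) x) :
    ‖gradient (fun y : Eu n => infDist y S) x‖ = 1 ∧
    (∃! xb : Eu n, xb ∈ S ∧ ‖x - xb‖ = infDist x S) ∧
    ∀ xb ∈ S, ‖x - xb‖ = infDist x S →
      gradient (fun y : Eu n => infDist y S) x = ‖x - xb‖⁻¹ • (x - xb) :=
  distance_function_gradient_general n S hSne hScpt x hx hd
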